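/- Fix N ≥ 1, β_1,…,β_N > 0, E_u > 0, an integer τ ≥ N, an index n, and for M > N set p_p = τ·p_u, η_i = p_p·β_i/(1+p_p·β_i), c_M = Σ_{i=1}^N p_u·β_i/((1+p_p·β_i)(K_i+1)) + 1, Σ̃_M = diag(η_1/(K_1+1),…,η_N/(K_N+1)) + (1/M)·[Ω(Ω+I_N)^{-1}]^{1/2}·H̄_M^H H̄_M·[Ω(Ω+I_N)^{-1}]^{1/2} with Ω = diag(K_1,…,K_N), and R̃(M) = log₂( 1 + p_u·β_n·(M−N) / ( c_M·[Σ̃_M^{-1}]_{nn} ) ). (a) If K_1 = … = K_N = 0 and p_u = E_u/√M, then R̃(M) → log₂(1 + τ·E_u²·β_n²) as M → ∞. (b) If K_i > 0 for all i, the arrival angles satisfy sin(π(sin θ_n − sin θ_i)/2) ≠ 0 for all pairs n ≠ i, and p_u = E_u/M, then Σ̃_M is invertible for all sufficiently large M and R̃(M) → log₂(1 + K_n·E_u·β_n/(K_n+1)) as M → ∞. -/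

import Mathlib

open Filter Matrix

/-- The `M×N` steering matrix with entries `[H̄]_{mn} = exp(−i(m−1)π sin θ_n)`, `m = 1,…,M`. -/
noncomputable def steer {N : ℕ} (θ : Fin N → ℝ) (M : ℕ) : Matrix (Fin M) (Fin N) ℂ :=
  fun m n => Complex.exp (-Complex.I * ((m : ℕ) : ℂ) * (Real.pi : ℂ) * (Real.sin (θ n) : ℂ))

/-- The MMSE coefficient `η_i = p_p β_i / (1 + p_p β_i)`. -/
noncomputable def etaCoef {N : ℕ} (pp : ℝ) (β : Fin N → ℝ) (i : Fin N) : ℝ :=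
  pp * β i / (1 + pp * β i)

/-- The diagonal matrix `[Ω(Ω+I_N)^{-1}]^{1/2}` with entries `√(K_i/(K_i+1))`. -/
noncomputable def sqrtRicean {N : ℕ} (K : Fin N → ℝ) : Matrix (Fin N) (Fin N) ℂ :=
  Matrix.diagonal fun i => (Real.sqrt (K i / (K i + 1)) : ℂ)

/-- The matrix `Σ̃_M = diag(η_i/(K_i+1)) + (1/M)·[Ω(Ω+I_N)^{-1}]^{1/2} H̄_M^H H̄_M
[Ω(Ω+I_N)^{-1}]^{1/2}`, with pilot power `p_p = τ p_u`. -/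
noncomputable def sigmaTilde {N : ℕ} (θ K β : Fin N → ℝ) (τ : ℕ) (pu : ℝ) (M : ℕ) :
    Matrix (Fin N) (Fin N) ℂ :=
  Matrix.diagonal (fun i => ((etaCoef (τ * pu) β i / (K i + 1) : ℝ) : ℂ)) +
    ((M : ℂ))⁻¹ • (sqrtRicean K * ((steer θ M)ᴴ * steer θ M) * sqrtRicean K)

/-- The coefficient `c_M = Σ_{i=1}^N p_u β_i/((1+p_p β_i)(K_i+1)) + 1` with `p_p = τ p_u`. -/
noncomputable def cCoef {N : ℕ} (K β : Fin N → ℝ) (τ : ℕ) (pu : ℝ) : ℝ :=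
  (∑ i : Fin N, pu * β i / ((1 + (τ * pu) * β i) * (K i + 1))) + 1

/-- The closed-form approximation `R̃(M) = log₂(1 + p_u β_n (M−N)/(c_M [Σ̃_M^{-1}]_{nn}))`
of the ZF uplink rate with imperfect CSI. -/
noncomputable def zfRateApproxIP {N : ℕ} (θ K β : Fin N → ℝ) (τ : ℕ) (n : Fin N)
    (pu : ℝ) (M : ℕ) : ℝ :=
  Real.logb 2 (1 + pu * β n * ((M : ℝ) - N) /
    (cCoef K β τ pu * (((sigmaTilde θ K β τ pu M)⁻¹) n n).re))


/-! As `p_u → 0` the constant `c_M` tends to `1`.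

If all `K_i = 0`, then `Σ̃_M = diag(η_i)`, so `[Σ̃_M^{-1}]_{nn} = 1/η_n` and the SINR is
`p_u β_n (M - N) η_n / c_M`; since `η_n ≈ τ p_u β_n` and `p_u² M = E_u²`, it tends to
`τ E_u² β_n²`.

If all `K_i > 0`, the `(i, j)` entry of `H̄_M^H H̄_M` is the geometric sum `∑_{m<M} z^m` with
`z = exp(iπ(sin θ_i - sin θ_j))`. For `i ≠ j` the angle condition says
`|z - 1| = 2 |sin(π(sin θ_i - sin θ_j)/2)| ≠ 0`, so the sum stays bounded and
`H̄_M^H H̄_M / M → I`. Hence `Σ̃_M → diag(K_i/(K_i+1))`, an invertible matrix, and by continuity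
of matrix inversion `[Σ̃_M^{-1}]_{nn} → (K_n+1)/K_n`, while `p_u (M - N) → E_u`. -/

open Topology Finset

theorem Matrix.inv_diagonal_of_ne_zero {n K : Type*} [Fintype n] [DecidableEq n] [Field K]
    {d : n → K} (hd : ∀ i, d i ≠ 0) : (diagonal d)⁻¹ = diagonal d⁻¹ :=
  inv_eq_right_inv <| by simp [diagonal_mul_diagonal, mul_inv_cancel₀ (hd _)]

theorem Matrix.eventually_isUnit_of_tendsto {α n K : Type*} [Fintype n] [DecidableEq n] [Field K]
    [TopologicalSpace K] [IsTopologicalRing K] [T1Space K] {l : Filter α}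
    {A : α → Matrix n n K} {A₀ : Matrix n n K} (hA : Tendsto A l (𝓝 A₀)) (h₀ : IsUnit A₀) :
    ∀ᶠ x in l, IsUnit (A x) := by
  have hdet := (continuous_id.matrix_det.tendsto A₀).comp hA
  filter_upwards [hdet.eventually_ne ((isUnit_iff_isUnit_det A₀).1 h₀).ne_zero] with x hx
  exact (isUnit_iff_isUnit_det _).2 (isUnit_iff_ne_zero.2 hx)

theorem tendsto_natCast_sub_div_self (a : ℝ) :
    Tendsto (fun M : ℕ => ((M : ℝ) - a) / M) atTop (𝓝 1) := by
  have h := (tendsto_const_div_atTop_nhds_zero_nat a).const_sub 1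
  rw [sub_zero] at h
  refine h.congr' ?_
  filter_upwards [eventually_ne_atTop 0] with M hM
  field_simp

theorem tendsto_inv_mul_geom_sum {𝕜 : Type*} [RCLike 𝕜] {z : 𝕜} (hz : ‖z‖ ≤ 1) (hz₁ : z ≠ 1) :
    Tendsto (fun M : ℕ => (M : 𝕜)⁻¹ * ∑ m ∈ range M, z ^ m) atTop (𝓝 0) := by
  have hbound (M : ℕ) : ‖∑ m ∈ range M, z ^ m‖ ≤ 2 / ‖z - 1‖ := by
    rw [geom_sum_eq hz₁, norm_div]
    gcongr
    calc ‖z ^ M - 1‖ ≤ ‖z‖ ^ M + ‖(1 : 𝕜)‖ := by rw [← norm_pow]; exact norm_sub_le _ _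
      _ ≤ 2 := by linarith [norm_one (α := 𝕜), pow_le_one₀ (n := M) (norm_nonneg z) hz]
  refine squeeze_zero_norm (fun M => ?_) (tendsto_const_div_atTop_nhds_zero_nat (2 / ‖z - 1‖))
  rw [norm_mul, norm_inv, RCLike.norm_natCast, div_eq_inv_mul (2 / _)]
  gcongr
  exact hbound M

theorem tendsto_cCoef_nhds_zero {N : ℕ} {K : Fin N → ℝ} (hK : ∀ i, 0 ≤ K i) (β : Fin N → ℝ)
    (τ : ℕ) : Tendsto (cCoef K β τ) (𝓝 0) (𝓝 1) := by
  have hcont : ContinuousAt (cCoef K β τ) 0 := by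
    unfold cCoef
    fun_prop (disch := intros; simp; linarith [hK ‹_›])
  simpa [cCoef] using hcont.tendsto

theorem tendsto_etaCoef_nhds_zero {N : ℕ} (β : Fin N → ℝ) (i : Fin N) :
    Tendsto (fun p => etaCoef p β i) (𝓝 0) (𝓝 0) := by
  have hcont : ContinuousAt (fun p => etaCoef p β i) 0 := by
    unfold etaCoef
    fun_prop (disch := simp)
  simpa [etaCoef] using hcont.tendsto

theorem sigmaTilde_of_K_eq_zero {N : ℕ} (θ : Fin N → ℝ) {K : Fin N → ℝ} (hK : ∀ i, K i = 0)
    (β : Fin N → ℝ) (τ : ℕ) (pu : ℝ) (M : ℕ) :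
    sigmaTilde θ K β τ pu M = diagonal fun i => ((etaCoef (τ * pu) β i : ℝ) : ℂ) := by
  simp [sigmaTilde, sqrtRicean, hK]

theorem zfRateApproxIP_of_K_eq_zero {N : ℕ} (θ : Fin N → ℝ) {K β : Fin N → ℝ}
    (hK : ∀ i, K i = 0) {τ : ℕ} {pu : ℝ} (hη : ∀ i, etaCoef (τ * pu) β i ≠ 0) (n : Fin N)
    (M : ℕ) : zfRateApproxIP θ K β τ n pu M =
      Real.logb 2 (1 + pu * β n * (M - N) * etaCoef (τ * pu) β n / cCoef K β τ pu) := by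
  rw [zfRateApproxIP, sigmaTilde_of_K_eq_zero θ hK,
    inv_diagonal_of_ne_zero fun i => Complex.ofReal_ne_zero.2 (hη i), diagonal_apply_eq,
    Pi.inv_apply, ← Complex.ofReal_inv, Complex.ofReal_re, ← div_eq_mul_inv, div_div_eq_mul_div]

theorem tendsto_zfRateApproxIP_of_K_eq_zero {N : ℕ} (θ : Fin N → ℝ) {K β : Fin N → ℝ}
    (hK : ∀ i, K i = 0) (hβ : ∀ i, 0 < β i) {τ : ℕ} (hτ : 0 < τ) (n : Fin N) {Eu : ℝ}
    (hEu : 0 < Eu) :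
    Tendsto (fun M : ℕ => zfRateApproxIP θ K β τ n (Eu / Real.sqrt M) M) atTop
      (𝓝 (Real.logb 2 (1 + τ * Eu ^ 2 * β n ^ 2))) := by
  have hpu : Tendsto (fun M : ℕ => Eu / Real.sqrt M) atTop (𝓝 0) :=
    tendsto_const_nhds.div_atTop (Real.tendsto_sqrt_atTop.comp tendsto_natCast_atTop_atTop)
  have hgain : Tendsto (fun M : ℕ => τ * β n ^ 2 / (1 + τ * β n * (Eu / Real.sqrt M))) atTop
      (𝓝 (τ * β n ^ 2)) := by
    simpa only [mul_zero, add_zero, div_one, Pi.div_def] using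
      tendsto_const_nhds.div ((hpu.const_mul (τ * β n : ℝ)).const_add 1) (by simp)
  have hrate := ((((tendsto_natCast_sub_div_self N).const_mul (Eu ^ 2)).mul hgain).div
    ((tendsto_cCoef_nhds_zero (fun i => (hK i).ge) β τ).comp hpu) one_ne_zero).const_add 1
    |>.logb (b := 2) (by positivity)
  rw [show Eu ^ 2 * 1 * (τ * β n ^ 2) / 1 = τ * Eu ^ 2 * β n ^ 2 by ring] at hrate
  refine hrate.congr' ?_
  filter_upwards [eventually_ne_atTop 0] with M hM
  have hpp : 0 < (τ : ℝ) * (Eu / Real.sqrt M) := by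
    have : 0 < Real.sqrt M := Real.sqrt_pos.2 (by positivity)
    positivity
  rw [zfRateApproxIP_of_K_eq_zero θ hK (fun i => (div_pos (mul_pos hpp (hβ i)) (by
    linarith [mul_pos hpp (hβ i)])).ne') n M, etaCoef]
  simp only [Pi.div_apply, Function.comp_apply]
  congr 3
  set s := Real.sqrt M
  have hM : (M : ℝ) = s ^ 2 := (Real.sq_sqrt (Nat.cast_nonneg M)).symm
  rw [hM]
  field_simp

theorem conjTranspose_steer_mul_steer_apply {N : ℕ} (θ : Fin N → ℝ) (M : ℕ) (i j : Fin N) :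
    ((steer θ M)ᴴ * steer θ M) i j =
      ∑ m ∈ range M,
        Complex.exp (Complex.I * ↑(Real.pi * (Real.sin (θ i) - Real.sin (θ j)))) ^ m := by
  rw [mul_apply, ← Fin.sum_univ_eq_sum_range]
  refine Finset.sum_congr rfl fun m _ => ?_
  rw [conjTranspose_apply, steer, steer, Complex.star_def, ← Complex.exp_conj, ← Complex.exp_add,
    ← Complex.exp_nat_mul]
  congr 1
  simp only [map_mul, map_neg, Complex.conj_I, Complex.conj_ofReal, map_natCast]
  push_cast
  ring

theorem tendsto_inv_smul_gram_steer {N : ℕ} {θ : Fin N → ℝ}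
    (hθ : ∀ i j : Fin N, i ≠ j →
      Real.sin (Real.pi * (Real.sin (θ i) - Real.sin (θ j)) / 2) ≠ 0) :
    Tendsto (fun M : ℕ => (M : ℂ)⁻¹ • ((steer θ M)ᴴ * steer θ M)) atTop (𝓝 1) := by
  refine tendsto_pi_nhds.2 fun i => tendsto_pi_nhds.2 fun j => ?_
  simp only [Matrix.smul_apply, smul_eq_mul, conjTranspose_steer_mul_steer_apply]
  rcases eq_or_ne i j with rfl | hij
  · refine tendsto_const_nhds.congr' ?_
    filter_upwards [eventually_ne_atTop 0] with M hM
    simp [hM]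
  · rw [one_apply_ne hij]
    refine tendsto_inv_mul_geom_sum (Complex.norm_exp_I_mul_ofReal _).le fun h => hθ i j hij ?_
    have := Complex.norm_exp_I_mul_ofReal_sub_one (Real.pi * (Real.sin (θ i) - Real.sin (θ j)))
    rw [h, sub_self, norm_zero, eq_comm, norm_eq_zero, mul_eq_zero] at this
    exact this.resolve_left two_ne_zero

theorem tendsto_sigmaTilde {N : ℕ} {θ K : Fin N → ℝ} (hK : ∀ i, 0 ≤ K i)
    (hθ : ∀ i j : Fin N, i ≠ j →
      Real.sin (Real.pi * (Real.sin (θ i) - Real.sin (θ j)) / 2) ≠ 0)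
    (β : Fin N → ℝ) (τ : ℕ) {pu : ℕ → ℝ} (hpu : Tendsto pu atTop (𝓝 0)) :
    Tendsto (fun M => sigmaTilde θ K β τ (pu M) M) atTop
      (𝓝 (diagonal fun i => ((K i / (K i + 1) : ℝ) : ℂ))) := by
  have hη : Tendsto (fun M => diagonal fun i =>
      ((etaCoef (τ * pu M) β i / (K i + 1) : ℝ) : ℂ)) atTop (𝓝 0) := by
    rw [← diagonal_zero]
    refine (continuous_id.matrix_diagonal.tendsto _).comp (tendsto_pi_nhds.2 fun i => ?_)
    have hdiag := ((tendsto_etaCoef_nhds_zero β i).comp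
      (by simpa using hpu.const_mul (τ : ℝ))).div_const (K i + 1)
    rw [zero_div] at hdiag
    have := (Complex.continuous_ofReal.tendsto 0).comp hdiag
    rw [Complex.ofReal_zero] at this
    exact this
  have hgram := (tendsto_const_nhds (x := sqrtRicean K)).mul
    (tendsto_inv_smul_gram_steer hθ) |>.mul (tendsto_const_nhds (x := sqrtRicean K))
  have hlim : sqrtRicean K * 1 * sqrtRicean K = diagonal fun i => ((K i / (K i + 1) : ℝ) : ℂ) := by
    rw [mul_one, sqrtRicean, diagonal_mul_diagonal]
    congr 1
    funext i
    rw [← Complex.ofReal_mul, Real.mul_self_sqrt (div_nonneg (hK i) (by linarith [hK i]))]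
  rw [hlim] at hgram
  simpa [sigmaTilde, Matrix.mul_smul, Matrix.smul_mul] using hη.add hgram

theorem isUnit_diagonal_ofReal_div_add_one {N : ℕ} {K : Fin N → ℝ} (hK : ∀ i, 0 < K i) :
    IsUnit (diagonal fun i => ((K i / (K i + 1) : ℝ) : ℂ)) :=
  isUnit_diagonal.2 <| Pi.isUnit_iff.2 fun i => isUnit_iff_ne_zero.2 <|
    Complex.ofReal_ne_zero.2 (div_pos (hK i) (by linarith [hK i])).ne'

theorem tendsto_inv_sigmaTilde_apply_re {N : ℕ} {θ K : Fin N → ℝ} (hK : ∀ i, 0 < K i)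
    (hθ : ∀ i j : Fin N, i ≠ j →
      Real.sin (Real.pi * (Real.sin (θ i) - Real.sin (θ j)) / 2) ≠ 0)
    (β : Fin N → ℝ) (τ : ℕ) {pu : ℕ → ℝ} (hpu : Tendsto pu atTop (𝓝 0)) (n : Fin N) :
    Tendsto (fun M => ((sigmaTilde θ K β τ (pu M) M)⁻¹ n n).re) atTop (𝓝 ((K n + 1) / K n)) := by
  have hunit := isUnit_diagonal_ofReal_div_add_one hK
  have hd i : ((K i / (K i + 1) : ℝ) : ℂ) ≠ 0 :=
    (Pi.isUnit_iff.1 (isUnit_diagonal.1 hunit) i).ne_zero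
  have hdet := ((isUnit_iff_isUnit_det _).1 hunit).ne_zero
  have hinv := ((continuousAt_matrix_inv _ (by
    rw [Ring.inverse_eq_inv']; exact continuousAt_inv₀ hdet)).tendsto.comp
    (tendsto_sigmaTilde (fun i => (hK i).le) hθ β τ hpu))
  have hentry : ((diagonal fun i => ((K i / (K i + 1) : ℝ) : ℂ))⁻¹ n n).re = (K n + 1) / K n := by
    rw [inv_diagonal_of_ne_zero hd, diagonal_apply_eq, Pi.inv_apply, ← Complex.ofReal_inv,
      Complex.ofReal_re, inv_div]
  exact hentry ▸ (Complex.continuous_re.tendsto _).comp ((hinv.apply_nhds n).apply_nhds n)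

theorem tendsto_zfRateApproxIP_of_K_pos {N : ℕ} {θ K β : Fin N → ℝ} (hK : ∀ i, 0 < K i)
    (hθ : ∀ i j : Fin N, i ≠ j →
      Real.sin (Real.pi * (Real.sin (θ i) - Real.sin (θ j)) / 2) ≠ 0)
    (τ : ℕ) (n : Fin N) {Eu : ℝ} (hEu : 0 ≤ Eu) (hβ : 0 ≤ β n) :
    Tendsto (fun M : ℕ => zfRateApproxIP θ K β τ n (Eu / M) M) atTop
      (𝓝 (Real.logb 2 (1 + K n * Eu * β n / (K n + 1)))) := by
  have hpu : Tendsto (fun M : ℕ => Eu / M) atTop (𝓝 0) := tendsto_const_div_atTop_nhds_zero_nat Eu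
  have hKn := hK n
  have hsnr := ((tendsto_natCast_sub_div_self N).const_mul (Eu * β n)).div
    (((tendsto_cCoef_nhds_zero (fun i => (hK i).le) β τ).comp hpu).mul
      (tendsto_inv_sigmaTilde_apply_re hK hθ β τ hpu n)) (by positivity)
  convert (hsnr.const_add 1).logb (b := 2) (by positivity) using 2 with M
  · simp only [zfRateApproxIP, Function.comp_apply, Pi.div_apply]
    congr 3
    ring
  · field_simp

theorem zf_rate_approx_imperfect_csi_limits_general
    (N : ℕ) (hN : 1 ≤ N) (θ : Fin N → ℝ)
    (K : Fin N → ℝ)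
    (β : Fin N → ℝ) (hβ : ∀ i, 0 < β i)
    (Eu : ℝ) (hEu : 0 < Eu) (τ : ℕ) (hτ : N ≤ τ) (n : Fin N) :
    ((∀ i, K i = 0) →
      Filter.Tendsto (fun M : ℕ => zfRateApproxIP θ K β τ n (Eu / Real.sqrt M) M)
        Filter.atTop (nhds (Real.logb 2 (1 + τ * Eu ^ 2 * β n ^ 2)))) ∧
    ((∀ i, 0 < K i) →
      (∀ n' i : Fin N, n' ≠ i →
        Real.sin (Real.pi * (Real.sin (θ n') - Real.sin (θ i)) / 2) ≠ 0) →
      (∀ᶠ M : ℕ in Filter.atTop, IsUnit (sigmaTilde θ K β τ (Eu / M) M)) ∧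
      Filter.Tendsto (fun M : ℕ => zfRateApproxIP θ K β τ n (Eu / M) M)
        Filter.atTop (nhds (Real.logb 2 (1 + K n * Eu * β n / (K n + 1))))) := by
  refine ⟨fun hK => tendsto_zfRateApproxIP_of_K_eq_zero θ hK hβ (by omega) n hEu,
    fun hK hθ => ⟨?_, tendsto_zfRateApproxIP_of_K_pos hK hθ τ n hEu.le (hβ n).le⟩⟩
  exact eventually_isUnit_of_tendsto (tendsto_sigmaTilde (fun i => (hK i).le) hθ β τ
    (tendsto_const_div_atTop_nhds_zero_nat Eu)) (isUnit_diagonal_ofReal_div_add_one hK)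

/-- (Corollary 8 of the paper.)
(a) If all `K_i = 0` and `p_u = E_u/√M`, then `R̃(M) → log₂(1 + τ E_u² β_n²)`.
(b) If all `K_i > 0`, the arrival angles satisfy `sin(π(sin θ_n − sin θ_i)/2) ≠ 0` for
`n ≠ i`, and `p_u = E_u/M`, then `Σ̃_M` is invertible for all large `M` and
`R̃(M) → log₂(1 + K_n E_u β_n/(K_n+1))`. -/
theorem zf_rate_approx_imperfect_csi_limits
    (N : ℕ) (hN : 1 ≤ N) (θ : Fin N → ℝ)
    (K : Fin N → ℝ) (hK : ∀ i, 0 ≤ K i)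
    (β : Fin N → ℝ) (hβ : ∀ i, 0 < β i)
    (Eu : ℝ) (hEu : 0 < Eu) (τ : ℕ) (hτ : N ≤ τ) (n : Fin N) :
    ((∀ i, K i = 0) →
      Filter.Tendsto (fun M : ℕ => zfRateApproxIP θ K β τ n (Eu / Real.sqrt M) M)
        Filter.atTop (nhds (Real.logb 2 (1 + τ * Eu ^ 2 * β n ^ 2)))) ∧
    ((∀ i, 0 < K i) →
      (∀ n' i : Fin N, n' ≠ i →
        Real.sin (Real.pi * (Real.sin (θ n') - Real.sin (θ i)) / 2) ≠ 0) →
      (∀ᶠ M : ℕ in Filter.atTop, IsUnit (sigmaTilde θ K β τ (Eu / M) M)) ∧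
      Filter.Tendsto (fun M : ℕ => zfRateApproxIP θ K β τ n (Eu / M) M)
        Filter.atTop (nhds (Real.logb 2 (1 + K n * Eu * β n / (K n + 1))))) :=
  zf_rate_approx_imperfect_csi_limits_general N hN θ K β hβ Eu hEu τ hτ n
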